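/- arXiv:1012.4661 — 2 statements merged into one kernel-verified Lean document; each statement's English description precedes it below -/
import Mathlib

section
/- For the self-injective cluster-tilted algebra given by an oriented cycle of length 2m (m ≥ 3), and the cluster-tilted algebra of type IV with m spikes all at distance 1 (parameter sequence ((1,0,0),…,(1,0,0)) of length m), the determinants of their Cartan matrices coincide: both equal 2m − 1. -/
open Matrix Equiv

/-- The Cartan matrix of the cluster-tilted algebra whose quiver is an oriented
cycle of length `n`: the `2n - n` entries equal to `0` sit exactly at the
positions `(i, i+1)` (indices mod `n`), all other entries are `1`. -/
def cartanCycle (n : ℕ) [NeZero n] : Matrix (Fin n) (Fin n) ℤ :=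
  Matrix.of fun i j => if j = i + 1 then 0 else 1

/-- The Cartan matrix of the cluster-tilted algebra of type IV with central cycle
of length `m` and all `m` spikes present (parameter sequence `((1,0,0),…,(1,0,0))`). -/
def cartanIV (m : ℕ) [NeZero m] : Matrix (Fin m ⊕ Fin m) (Fin m ⊕ Fin m) ℤ :=
  Matrix.of fun u v =>
    match u, v with
    | Sum.inl _, Sum.inl _ => 1
    | Sum.inl u, Sum.inr j => if u = j + 1 then 1 else 0
    | Sum.inr j, Sum.inl v => if v = j then 1 else 0
    | Sum.inr j, Sum.inr l => if l = j ∨ l = j - 1 then 1 else 0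

private def PM (n : ℕ) : Matrix (Fin (n+1)) (Fin (n+1)) ℤ := (finRotate (n+1)).permMatrix ℤ

private lemma PM_apply (n : ℕ) (i j : Fin (n+1)) : PM n i j = if j = i + 1 then 1 else 0 := by
  simp [PM, PEquiv.toMatrix_apply, Equiv.toPEquiv_apply, finRotate_succ_apply, eq_comm]

private lemma PM_det (n : ℕ) : (PM n).det = (-1 : ℤ)^n := by
  rw [PM, Matrix.det_permutation, sign_finRotate]
  simp

private lemma PM_mul_const (n : ℕ) (c : ℤ) :
    PM n * Matrix.of (fun _ _ => c) = Matrix.of (fun _ _ => c) := by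
  ext i j
  rw [Matrix.mul_apply]
  simp [PM_apply, ite_mul]

private lemma PMT_mul_const (n : ℕ) (c : ℤ) :
    (PM n)ᵀ * Matrix.of (fun _ _ => c) = Matrix.of (fun _ _ => c) := by
  ext i j
  rw [Matrix.mul_apply]
  simp only [transpose_apply, PM_apply, Matrix.of_apply, ite_mul, one_mul, zero_mul]
  have h : ∀ x : Fin (n+1), (i = x + 1) ↔ (x = i - 1) := by
    intro x
    rw [eq_sub_iff_add_eq, eq_comm]
  simp [h]

private lemma const_mul_PMT (n : ℕ) (c : ℤ) :
    Matrix.of (fun _ _ => c) * (PM n)ᵀ = Matrix.of (fun _ _ => c) := by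
  ext i j
  rw [Matrix.mul_apply]
  simp [PM_apply, mul_ite]

private lemma det_one_add_const (k : ℕ) (c : ℤ) :
    ((1 : Matrix (Fin k) (Fin k) ℤ) + Matrix.of (fun _ _ => c)).det = 1 + k * c := by
  have h : (Matrix.of (fun _ _ => c) : Matrix (Fin k) (Fin k) ℤ)
      = replicateCol Unit (fun _ => c) * replicateRow Unit (fun _ => (1:ℤ)) := by
    ext i j
    simp [Matrix.mul_apply]
  rw [h, det_one_add_replicateCol_mul_replicateRow]
  simp [dotProduct, Finset.sum_const, mul_comm]

private lemma cycle_det (n : ℕ) : (cartanCycle (n+1)).det = n := by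
  have hC : cartanCycle (n+1) = Matrix.of (fun _ _ => (1:ℤ)) - PM n := by
    ext i j
    simp only [cartanCycle, Matrix.sub_apply, Matrix.of_apply, PM_apply]
    split <;> norm_num
  have key : Matrix.of (fun _ _ => (1:ℤ)) - PM n
      = -(PM n * (1 + Matrix.of (fun _ _ => (-1:ℤ)))) := by
    rw [Matrix.mul_add, Matrix.mul_one, PM_mul_const]
    ext i j
    simp [sub_eq_add_neg]
  rw [hC, key, Matrix.det_neg, det_mul, PM_det, det_one_add_const]
  have h1 : ((-1:ℤ))^n * (-1)^n = 1 := by rw [← mul_pow]; norm_num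
  have h2 : ((-1:ℤ))^(n+1) * (-1)^n = -1 := by
    rw [pow_succ]
    linear_combination (-1 : ℤ) * h1
  rw [Fintype.card_fin]
  calc ((-1:ℤ))^(n+1) * ((-1)^n * (1 + (n+1) * (-1)))
      = ((-1:ℤ))^(n+1) * (-1)^n * (1 + ((n:ℤ)+1) * (-1)) := by push_cast; ring
    _ = (n : ℤ) := by rw [h2]; ring

private lemma iv_det (n : ℕ) : (cartanIV (n+2)).det = 2 * ((n:ℤ)+2) - 1 := by
  set J : Matrix (Fin (n+2)) (Fin (n+2)) ℤ := Matrix.of (fun _ _ => (1:ℤ)) with hJ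
  have hone : (1 : Fin (n+2)) ≠ 0 := by
    simp [Fin.ext_iff]
  have hM : cartanIV (n+2) = fromBlocks J (PM (n+1))ᵀ 1 (1 + (PM (n+1))ᵀ) := by
    ext u v
    cases u with
    | inl u =>
      cases v with
      | inl v => simp [cartanIV, fromBlocks, hJ]
      | inr v => simp [cartanIV, fromBlocks, transpose_apply, PM_apply]
    | inr u =>
      cases v with
      | inl v =>
        simp only [cartanIV, Matrix.of_apply, fromBlocks_apply₂₁, Matrix.one_apply]
        simp [eq_comm]
      | inr v =>
        simp only [cartanIV, Matrix.of_apply, fromBlocks_apply₂₂, Matrix.add_apply,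
          Matrix.one_apply, transpose_apply, PM_apply]
        have hsub : (v = u - 1) ↔ (u = v + 1) := by
          rw [eq_sub_iff_add_eq, eq_comm]
        by_cases h2 : v = u - 1
        · have h2' : u = v + 1 := hsub.mp h2
          by_cases h1 : v = u
          · exfalso
            subst h1
            have h4 : v + 0 = v + 1 := by rw [add_zero]; exact h2'
            exact hone (add_left_cancel h4).symm
          · have h1' : ¬ u = v := fun h => h1 h.symm
            rw [if_pos (Or.inr h2), if_neg h1', if_pos h2']
            norm_num
        · have h2' : ¬ u = v + 1 := fun h => h2 (hsub.mpr h)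
          by_cases h1 : v = u
          · have h1' : u = v := h1.symm
            rw [if_pos (Or.inl h1), if_pos h1', if_neg h2']
            norm_num
          · have h1' : ¬ u = v := fun h => h1 h.symm
            rw [if_neg (not_or.mpr ⟨h1, h2⟩), if_neg h1', if_neg h2']
            norm_num
  have hE : (fromBlocks (1 : Matrix (Fin (n+2)) (Fin (n+2)) ℤ) (-(PM (n+1))ᵀ) 0 1).det = 1 := by
    rw [det_fromBlocks_zero₂₁]
    simp
  have hmul : cartanIV (n+2) * fromBlocks 1 (-(PM (n+1))ᵀ) 0 1
      = fromBlocks J ((PM (n+1))ᵀ - J) 1 1 := by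
    have c1 : J * (PM (n+1))ᵀ = J := by rw [hJ]; exact const_mul_PMT _ _
    rw [hM, fromBlocks_multiply]
    congr 1 <;> simp [Matrix.mul_neg, c1] <;> abel
  have hdet : (cartanIV (n+2)).det = (fromBlocks J ((PM (n+1))ᵀ - J) 1 1).det := by
    rw [← hmul, det_mul, hE, mul_one]
  rw [hdet, det_fromBlocks_one₂₂, Matrix.mul_one]
  have h2 : J - ((PM (n+1))ᵀ - J) = -((PM (n+1))ᵀ * (1 + Matrix.of (fun _ _ => (-2:ℤ)))) := by
    rw [hJ, Matrix.mul_add, Matrix.mul_one, PMT_mul_const]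
    ext i j
    simp [hJ]
    ring
  rw [h2, Matrix.det_neg, det_mul, Matrix.det_transpose, PM_det, det_one_add_const,
    Fintype.card_fin]
  have h1 : ((-1:ℤ))^(n+1) * (-1)^(n+1) = 1 := by rw [← mul_pow]; norm_num
  have h3 : ((-1:ℤ))^(n+2) * (-1)^(n+1) = -1 := by
    rw [pow_succ ((-1:ℤ)) (n+1)]
    linear_combination (-1 : ℤ) * h1
  push_cast
  calc ((-1:ℤ))^(n+2) * ((-1)^(n+1) * (1 + ((n:ℤ)+2) * (-2)))
      = ((-1:ℤ))^(n+2) * (-1)^(n+1) * (1 + ((n:ℤ)+2) * (-2)) := by ring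
    _ = 2 * ((n:ℤ)+2) - 1 := by rw [h3]; ring

theorem stmt_15 (m : ℕ) [NeZero m] [NeZero (2 * m)] (hm : 3 ≤ m) :
    (cartanCycle (2 * m)).det = 2 * (m : ℤ) - 1 ∧
      (cartanIV m).det = 2 * (m : ℤ) - 1 := by
  have hcyc : ∀ (n : ℕ) [NeZero n], (cartanCycle n).det = (n : ℤ) - 1 := by
    intro n _
    rcases n with _ | k
    · exact absurd rfl (NeZero.ne 0)
    · rw [cycle_det]
      push_cast
      ring
  have hiv : ∀ (n : ℕ) [NeZero n], 2 ≤ n → (cartanIV n).det = 2 * (n : ℤ) - 1 := by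
    intro n _ hn
    rcases n with _ | _ | k
    · omega
    · omega
    · rw [iv_det]
      push_cast
      ring
  refine ⟨?_, ?_⟩
  · rw [hcyc]
    push_cast
    ring
  · rw [hiv m (by omega)]
end

section
/- The two self-injective cluster-tilted algebras of type D_{2m} (m ≥ 3) — the one with quiver an oriented cycle of length 2m, and the one of type IV with parameter sequence ((1,0,0),…,(1,0,0)) of length m — have Cartan matrices that define equivalent bilinear forms over ℤ: there exists P ∈ GL_{2m}(ℤ) with P·C₁·Pᵀ = C₂. -/
open Matrix

set_option linter.unusedSectionVars false

namespace CT

open Fin.CommRing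

variable (m : ℕ) [NeZero m] [NeZero (m + m)]

/-- embedding `Fin m → Fin (m+m)` -/
def iota : Fin m → Fin (m + m) := Fin.castAdd m

/-- position `-2u` in `Fin (m+m)` -/
def av (u : Fin m) : Fin (m + m) := -(iota m u + iota m u)

/-- rows of the congruence matrix -/
def rowP : Fin m ⊕ Fin m → Fin (m + m) → ℤ
  | Sum.inl u, k => if k = av m u then 1 else 0
  | Sum.inr j, k => (if k = av m j then 1 else 0) - (if k = av m j - 1 then 1 else 0)

/-- columns of the inverse -/
def colQ : Fin m ⊕ Fin m → Fin (m + m) → ℤ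
  | Sum.inl u, k => (if k = av m u then 1 else 0) + (if k = av m u - 1 then 1 else 0)
  | Sum.inr j, k => -(if k = av m j - 1 then 1 else 0)

def P : Matrix (Fin (m + m)) (Fin (m + m)) ℤ :=
  Matrix.of fun i k => rowP m (finSumFinEquiv.symm i) k

def Q : Matrix (Fin (m + m)) (Fin (m + m)) ℤ :=
  Matrix.of fun k i => colQ m (finSumFinEquiv.symm i) k

lemma collapse_left (a : Fin (m + m)) (f : Fin (m + m) → ℤ) :
    ∑ k, (if k = a then (1 : ℤ) else 0) * f k = f a := by
  rw [Finset.sum_congr rfl (fun k _ => by rw [ite_mul, one_mul, zero_mul]),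
    Finset.sum_ite_eq' Finset.univ a f]
  simp

lemma collapse_right (a : Fin (m + m)) (f : Fin (m + m) → ℤ) :
    ∑ l, f l * (if l = a then (1 : ℤ) else 0) = f a := by
  rw [Finset.sum_congr rfl (fun k _ => by rw [mul_ite, mul_one, mul_zero]),
    Finset.sum_ite_eq' Finset.univ a f]
  simp

lemma par (x y : Fin (m + m)) : x + x ≠ y + y + 1 := by
  intro h
  have h' := congrArg Fin.val h
  rw [Fin.val_add x x, Fin.val_add (y + y) 1, Fin.val_add y y, Fin.val_one'] at h'
  have hd : (2 : ℕ) ∣ (m + m) := ⟨m, by omega⟩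
  have hm1 : 0 < m := Nat.pos_of_ne_zero (NeZero.ne m)
  have h1 : 1 % (m + m) = 1 := Nat.mod_eq_of_lt (by omega)
  rw [h1] at h'
  have e1 : (x.val + x.val) % (m + m) % 2 = (x.val + x.val) % 2 :=
    Nat.mod_mod_of_dvd _ hd
  have e2 : ((y.val + y.val) % (m + m) + 1) % (m + m) % 2
      = ((y.val + y.val) % (m + m) + 1) % 2 := Nat.mod_mod_of_dvd _ hd
  have e3 : (y.val + y.val) % (m + m) % 2 = (y.val + y.val) % 2 :=
    Nat.mod_mod_of_dvd _ hd
  have h2 := congrArg (· % 2) h'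
  omega

lemma val_two (u : Fin m) : (iota m u + iota m u).val = u.val + u.val := by
  rw [Fin.val_add]
  have : (iota m u).val = u.val := rfl
  rw [this]
  exact Nat.mod_eq_of_lt (by have := u.isLt; omega)

lemma two_inj (u v : Fin m) : iota m u + iota m u = iota m v + iota m v ↔ u = v := by
  constructor
  · intro h
    have h' := congrArg Fin.val h
    rw [val_two, val_two] at h'
    exact Fin.ext (by omega)
  · rintro rfl; rfl

lemma two_succ (hm : 3 ≤ m) (u v : Fin m) :
    iota m u + iota m u = iota m v + iota m v + 1 + 1 ↔ u = v + 1 := by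
  have hu := u.isLt
  have hv := v.isLt
  have h1 : (1 : Fin (m + m)).val = 1 := by
    rw [Fin.val_one']; exact Nat.mod_eq_of_lt (by omega)
  have h1m : (1 : Fin m).val = 1 := by
    rw [Fin.val_one']; exact Nat.mod_eq_of_lt (by omega)
  have hrhs : (iota m v + iota m v + 1 + 1).val = (v.val + v.val + 2) % (m + m) := by
    rw [Fin.val_add (iota m v + iota m v + 1) 1, Fin.val_add (iota m v + iota m v) 1,
      val_two, h1]
    have e1 : (v.val + v.val + 1) % (m + m) = v.val + v.val + 1 :=
      Nat.mod_eq_of_lt (by omega)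
    rw [e1]
  have hv1 : (v + 1 : Fin m).val = (v.val + 1) % m := by
    rw [Fin.val_add, h1m]
  constructor
  · intro h
    have h' := congrArg Fin.val h
    rw [val_two, hrhs] at h'
    apply Fin.ext
    rw [hv1]
    rcases Nat.lt_or_ge (v.val + 1) m with hc | hc
    · rw [Nat.mod_eq_of_lt hc]
      rw [Nat.mod_eq_of_lt (by omega)] at h'
      omega
    · have hveq : v.val + 1 = m := by omega
      have : (v.val + v.val + 2) % (m + m) = 0 := by
        rw [show v.val + v.val + 2 = m + m by omega, Nat.mod_self]
      rw [this] at h'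
      rw [show (v.val + 1) % m = 0 by rw [hveq, Nat.mod_self]]
      omega
  · intro h
    apply Fin.ext
    rw [val_two, hrhs]
    have h' := congrArg Fin.val h
    rw [hv1] at h'
    rcases Nat.lt_or_ge (v.val + 1) m with hc | hc
    · rw [Nat.mod_eq_of_lt hc] at h'
      rw [Nat.mod_eq_of_lt (by omega)]
      omega
    · have hveq : v.val + 1 = m := by omega
      rw [hveq, Nat.mod_self] at h'
      rw [show v.val + v.val + 2 = m + m by omega, Nat.mod_self]
      omega

lemma one_ne_zero' (hm : 3 ≤ m) : (1 : Fin m) ≠ 0 := by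
  intro h
  have h' := congrArg Fin.val h
  rw [Fin.val_one'] at h'
  rw [Nat.mod_eq_of_lt (by omega)] at h'
  simp at h'

lemma Bval (hm : 3 ≤ m) (x y : Fin m ⊕ Fin m) :
    ∑ l, (∑ k, rowP m x k * cartanCycle (m + m) k l) * rowP m y l = cartanIV m x y := by
  cases x <;> cases y <;>
    simp only [rowP, cartanIV, Matrix.of_apply, sub_mul, mul_sub,
      Finset.sum_sub_distrib, collapse_left, collapse_right]
  case inl.inl u v =>
    show (if av m v = av m u + 1 then (0:ℤ) else 1) = 1
    rw [if_neg (fun h => par m (iota m u) (iota m v) (by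
      simp only [av] at h
      first | linear_combination h | linear_combination -h))]
  case inl.inr u j =>
    show (if av m j = av m u + 1 then (0:ℤ) else 1)
        - (if av m j - 1 = av m u + 1 then (0:ℤ) else 1)
        = if u = j + 1 then 1 else 0
    rw [if_neg (fun h => par m (iota m u) (iota m j) (by
      simp only [av] at h
      first | linear_combination h | linear_combination -h))]
    have key : (av m j - 1 = av m u + 1) ↔ u = j + 1 := by
      rw [← two_succ m hm u j]
      constructor <;> intro h <;> simp only [av] at h ⊢ <;>
        first | linear_combination h | linear_combination -h
    simp only [key]
    by_cases h : u = j + 1 <;> simp [h]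
  case inr.inl j v =>
    show (if av m v = av m j + 1 then (0:ℤ) else 1)
        - (if av m v = av m j - 1 + 1 then (0:ℤ) else 1)
        = if v = j then 1 else 0
    rw [if_neg (fun h => par m (iota m j) (iota m v) (by
      simp only [av] at h
      first | linear_combination h | linear_combination -h))]
    have key : (av m v = av m j - 1 + 1) ↔ v = j := by
      rw [show (v = j) ↔ (j = v) from eq_comm, ← two_inj m j v]
      constructor <;> intro h <;> simp only [av] at h ⊢ <;>
        first | linear_combination h | linear_combination -h
    simp only [key]
    by_cases h : v = j <;> simp [h]
  case inr.inr j l =>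
    show ((if av m l = av m j + 1 then (0:ℤ) else 1)
        - (if av m l = av m j - 1 + 1 then (0:ℤ) else 1))
        - ((if av m l - 1 = av m j + 1 then (0:ℤ) else 1)
        - (if av m l - 1 = av m j - 1 + 1 then (0:ℤ) else 1))
        = if l = j ∨ l = j - 1 then 1 else 0
    rw [if_neg (fun h => par m (iota m j) (iota m l) (by
      simp only [av] at h
      first | linear_combination h | linear_combination -h))]
    rw [if_neg (show ¬ (av m l - 1 = av m j - 1 + 1) from fun h =>
      par m (iota m j) (iota m l) (by
        simp only [av] at h
        first | linear_combination h | linear_combination -h))]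
    have key1 : (av m l - 1 = av m j + 1) ↔ j = l + 1 := by
      rw [← two_succ m hm j l]
      constructor <;> intro h <;> simp only [av] at h ⊢ <;>
        first | linear_combination h | linear_combination -h
    have key2 : (av m l = av m j - 1 + 1) ↔ j = l := by
      rw [← two_inj m j l]
      constructor <;> intro h <;> simp only [av] at h ⊢ <;>
        first | linear_combination h | linear_combination -h
    simp only [key1, key2]
    have hlj : (l = j) ↔ (j = l) := eq_comm
    have hlj1 : (l = j - 1) ↔ (j = l + 1) := by
      constructor <;> intro h <;> first | linear_combination h | linear_combination -h
    simp only [hlj, hlj1]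
    by_cases h1 : j = l + 1 <;> by_cases h2 : j = l
    · exfalso
      have hll : (1 : Fin m) = 0 := by
        rw [h2] at h1
        first | linear_combination h1 | linear_combination -h1
      exact one_ne_zero' m hm hll
    · rw [if_pos h1, if_neg h2, if_pos (Or.inr h1)]; norm_num
    · rw [if_neg h1, if_pos h2, if_pos (Or.inl h2)]; norm_num
    · rw [if_neg h1, if_neg h2, if_neg (by rintro (h | h) <;> [exact h2 h; exact h1 h])]
      norm_num

lemma PQval (hm : 3 ≤ m) (x y : Fin m ⊕ Fin m) :
    ∑ k, rowP m x k * colQ m y k = if x = y then 1 else 0 := by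
  cases x <;> cases y <;>
    simp only [rowP, colQ, mul_add, mul_sub, sub_mul, add_mul, mul_neg, neg_mul,
      Finset.sum_add_distrib, Finset.sum_sub_distrib, Finset.sum_neg_distrib,
      collapse_left, collapse_right]
  case inl.inl u v =>
    show (if av m u = av m v then (1:ℤ) else 0)
        + (if av m u = av m v - 1 then (1:ℤ) else 0)
        = if Sum.inl u = (Sum.inl v : Fin m ⊕ Fin m) then 1 else 0
    have key : (av m u = av m v) ↔ u = v := by
      rw [← two_inj m u v]
      constructor <;> intro h <;> simp only [av] at h ⊢ <;>
        first | linear_combination h | linear_combination -h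
    simp only [key]
    rw [if_neg (show ¬ (av m u = av m v - 1) from fun h =>
      par m (iota m u) (iota m v) (by
        simp only [av] at h
        first | linear_combination h | linear_combination -h))]
    by_cases h : u = v <;> simp [h]
  case inl.inr u j =>
    show -(if av m u = av m j - 1 then (1:ℤ) else 0)
        = if (Sum.inl u : Fin m ⊕ Fin m) = Sum.inr j then 1 else 0
    rw [if_neg (show ¬ (av m u = av m j - 1) from fun h =>
      par m (iota m u) (iota m j) (by
        simp only [av] at h
        first | linear_combination h | linear_combination -h))]
    simp
  case inr.inl j v =>
    show ((if av m j = av m v then (1:ℤ) else 0)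
        - (if av m j - 1 = av m v then (1:ℤ) else 0))
        + ((if av m j = av m v - 1 then (1:ℤ) else 0)
        - (if av m j - 1 = av m v - 1 then (1:ℤ) else 0))
        = if (Sum.inr j : Fin m ⊕ Fin m) = Sum.inl v then 1 else 0
    have key1 : (av m j = av m v) ↔ j = v := by
      rw [← two_inj m j v]
      constructor <;> intro h <;> simp only [av] at h ⊢ <;>
        first | linear_combination h | linear_combination -h
    have key2 : (av m j - 1 = av m v - 1) ↔ j = v := by
      rw [← two_inj m j v]
      constructor <;> intro h <;> simp only [av] at h ⊢ <;>
        first | linear_combination h | linear_combination -h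
    simp only [key1, key2]
    rw [if_neg (show ¬ (av m j = av m v - 1) from fun h =>
      par m (iota m j) (iota m v) (by
        simp only [av] at h
        first | linear_combination h | linear_combination -h))]
    rw [if_neg (show ¬ (av m j - 1 = av m v) from fun h =>
      par m (iota m v) (iota m j) (by
        simp only [av] at h
        first | linear_combination h | linear_combination -h))]
    by_cases h : j = v <;> simp [h]
  case inr.inr j v =>
    show -((if av m j = av m v - 1 then (1:ℤ) else 0)
        - (if av m j - 1 = av m v - 1 then (1:ℤ) else 0))
        = if (Sum.inr j : Fin m ⊕ Fin m) = Sum.inr v then 1 else 0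
    have key : (av m j - 1 = av m v - 1) ↔ j = v := by
      rw [← two_inj m j v]
      constructor <;> intro h <;> simp only [av] at h ⊢ <;>
        first | linear_combination h | linear_combination -h
    simp only [key]
    rw [if_neg (show ¬ (av m j = av m v - 1) from fun h =>
      par m (iota m j) (iota m v) (by
        simp only [av] at h
        first | linear_combination h | linear_combination -h))]
    by_cases h : j = v <;> simp [h]

lemma PQ (hm : 3 ≤ m) : P m * Q m = 1 := by
  ext i j
  rw [Matrix.mul_apply, Matrix.one_apply]
  have := PQval m hm (finSumFinEquiv.symm i) (finSumFinEquiv.symm j)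
  simp only [P, Q, Matrix.of_apply]
  rw [this]
  simp only [Equiv.apply_eq_iff_eq]

end CT

theorem stmt_19 (m : ℕ) [NeZero m] [NeZero (m + m)] (hm : 3 ≤ m) :
    ∃ P : Matrix (Fin (m + m)) (Fin (m + m)) ℤ, IsUnit P.det ∧
      P * cartanCycle (m + m) * Pᵀ =
        (cartanIV m).submatrix (finSumFinEquiv.symm) (finSumFinEquiv.symm) := by
  refine ⟨CT.P m, Matrix.isUnit_det_of_right_inverse (CT.PQ m hm), ?_⟩
  ext i j
  rw [Matrix.submatrix_apply]
  have := CT.Bval m hm (finSumFinEquiv.symm i) (finSumFinEquiv.symm j)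
  rw [← this]
  simp only [Matrix.mul_apply, Matrix.transpose_apply, CT.P, Matrix.of_apply]
end
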